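/- Let k be a field, V = V_0 ⊕ ⋯ ⊕ V_l with Fil^i V = ⊕_{j≥i} V_j, and 𝕄 an endomorphism whose block matrix M is special lower-triangular of type ≤ s. Then for every i ≤ l − s + 1, im(𝕄) ∩ Fil^i V ⊆ (im(𝕄) ∩ Fil^{i+1} V) + 𝕄(Fil^{i+s} V). -/

import Mathlib

/-!
Triangularity makes `𝕄` map `Fil^m` into `Fil^(m-s)`, and on `Fil^(i+s)` the `i`-th component
of `𝕄` is `a_{i,i+s}`. Rank–nullity for that component gives
`dim 𝕄(Fil^(i+s)) ≥ rank a_{i,i+s} + dim 𝕄(Fil^(i+s+1))`. Summed over `i` these telescope to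
`Σ rank a_{i,i+s} ≤ dim 𝕄(Fil^s) ≤ dim im 𝕄`, and speciality says the two ends agree, so every
inequality is an equality: `𝕄(Fil^s) = im 𝕄` and `𝕄(Fil^(i+s)) ∩ Fil^(i+1) = 𝕄(Fil^(i+s+1))`.
Induction on `i` then gives `im 𝕄 ∩ Fil^i ⊆ 𝕄(Fil^(i+s))`.
-/

/-- The endomorphism of `V = ⊕_i k^{d_i}` determined by a block matrix
`a = (a_{i,j})` with `a_{i,j} ∈ M_{d_i × d_j}(k)`. -/
noncomputable def blockEnd (k : Type*) [Field k] (l : ℕ) (d : Fin (l + 1) → ℕ)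
    (a : ∀ i j : Fin (l + 1), Matrix (Fin (d i)) (Fin (d j)) k) :
    (∀ i : Fin (l + 1), Fin (d i) → k) →ₗ[k] (∀ i : Fin (l + 1), Fin (d i) → k) :=
  LinearMap.pi fun i => ∑ j : Fin (l + 1), (Matrix.mulVecLin (a i j)) ∘ₗ LinearMap.proj j

/-- The decreasing filtration `Fil^m V = ⊕_{j ≥ m} V_j` (with `Fil^m V = V` for
`m ≤ 0` and `Fil^m V = 0` for `m > l`). -/
def blockFil (k : Type*) [Field k] (l : ℕ) (d : Fin (l + 1) → ℕ) (m : ℤ) :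
    Submodule k (∀ i : Fin (l + 1), Fin (d i) → k) where
  carrier := {v | ∀ i : Fin (l + 1), (i : ℤ) < m → v i = 0}
  add_mem' := by
    intro x y hx hy i him
    simp [Pi.add_apply, hx i him, hy i him]
  zero_mem' := by intro i _; rfl
  smul_mem' := by
    intro c x hx i him
    simp [Pi.smul_apply, hx i him]


theorem Submodule.finrank_map_add_finrank_inf_ker {K V W : Type*} [DivisionRing K]
    [AddCommGroup V] [Module K V] [AddCommGroup W] [Module K W]
    (p : Submodule K V) [FiniteDimensional K p] (f : V →ₗ[K] W) :
    Module.finrank K (p.map f) + Module.finrank K ↥(p ⊓ LinearMap.ker f) = Module.finrank K p := by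
  rw [← f.range_domRestrict, ← Submodule.map_comap_subtype, Submodule.finrank_map_subtype_eq,
    ← LinearMap.ker_domRestrict]
  exact (f.domRestrict p).finrank_range_add_finrank_ker

open Module

section BlockFiltration

variable {k : Type*} [Field k] {l : ℕ} {d : Fin (l + 1) → ℕ}

theorem blockFil_antitone : Antitone (blockFil k l d) :=
  fun _ _ hmn _ hv i hi => hv i (hi.trans_le hmn)

theorem blockFil_eq_top {m : ℤ} (hm : m ≤ 0) : blockFil k l d m = ⊤ :=
  eq_top_iff.2 fun _ _ i hi => absurd hi (by omega)

theorem blockFil_eq_bot {m : ℤ} (hm : (l : ℤ) < m) : blockFil k l d m = ⊥ :=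
  eq_bot_iff.2 fun _ hv => (Submodule.mem_bot k).2 (funext fun i => hv i (by omega))

theorem blockFil_succ (i : Fin (l + 1)) :
    blockFil k l d ((i : ℤ) + 1) = blockFil k l d i ⊓ LinearMap.ker (LinearMap.proj i) := by
  ext v
  simp only [Submodule.mem_inf, LinearMap.mem_ker, LinearMap.proj_apply]
  refine ⟨fun hv => ⟨fun j hj => hv j (by omega), hv i (by omega)⟩, fun ⟨hv, hvi⟩ j hj => ?_⟩
  by_cases hji : j = i
  · exact hji ▸ hvi
  · exact hv j (by have := Fin.val_ne_of_ne hji; omega)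

theorem single_mem_blockFil (j : Fin (l + 1)) (x : Fin (d j) → k) :
    Pi.single j x ∈ blockFil k l d j := fun _ hi =>
  Pi.single_eq_of_ne (M := fun i => Fin (d i) → k) (by rintro rfl; omega) x

end BlockFiltration

def IsLowerTriangularOfType {k : Type*} [Field k] {l : ℕ} {d : Fin (l + 1) → ℕ} (s : ℕ)
    (a : ∀ i j : Fin (l + 1), Matrix (Fin (d i)) (Fin (d j)) k) : Prop :=
  ∀ i j : Fin (l + 1), (i : ℕ) + s < j → a i j = 0

def IsSpecialLowerTriangularOfType {k : Type*} [Field k] {l : ℕ} {d : Fin (l + 1) → ℕ} (s : ℕ)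
    (a : ∀ i j : Fin (l + 1), Matrix (Fin (d i)) (Fin (d j)) k) : Prop :=
  IsLowerTriangularOfType s a ∧ finrank k (LinearMap.range (blockEnd k l d a)) =
    ∑ i : Fin (l + 1), if h : (i : ℕ) + s ≤ l then (a i ⟨i + s, Nat.lt_succ_of_le h⟩).rank else 0

section BlockEnd

variable {k : Type*} [Field k] {l s : ℕ} {d : Fin (l + 1) → ℕ}
  {a : ∀ i j : Fin (l + 1), Matrix (Fin (d i)) (Fin (d j)) k}

local notation "𝕄" => blockEnd k l d a
local notation "Fil" => blockFil k l d

theorem blockEnd_apply (v : ∀ i : Fin (l + 1), Fin (d i) → k) (i : Fin (l + 1)) :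
    𝕄 v i = ∑ j, (a i j).mulVec (v j) := by
  simp [blockEnd]

theorem sum_finrank_map_blockFil_sub (m : ℕ) :
    ∑ i : Fin (l + 1),
        ((finrank k ((Fil (i + m)).map 𝕄) : ℤ) - finrank k ((Fil (i + m + 1)).map 𝕄)) =
      finrank k ((Fil m).map 𝕄) := by
  obtain ⟨f, hf⟩ : ∃ f : ℤ → ℤ, ∀ n, f n = finrank k ((Fil n).map 𝕄) := ⟨_, fun _ => rfl⟩
  have htop : f (l + 1 + m) = 0 := by
    rw [hf, blockFil_eq_bot (by omega), Submodule.map_bot, finrank_bot, Nat.cast_zero]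
  simp only [← hf]
  rw [Fin.sum_univ_eq_sum_range (fun n => f (n + m) - f (n + m + 1)), ← sub_zero (f m), ← htop]
  convert Finset.sum_range_sub' (fun n : ℕ => f (n + m)) (l + 1) using 3 <;> push_cast <;> ring_nf

namespace IsLowerTriangularOfType

theorem map_blockFil_le (ha : IsLowerTriangularOfType s a) (m : ℤ) :
    (Fil m).map 𝕄 ≤ Fil (m - s) := by
  rintro _ ⟨v, hv, rfl⟩ i hi
  rw [blockEnd_apply]
  refine Finset.sum_eq_zero fun j _ => ?_
  by_cases hj : (j : ℤ) < m
  · rw [hv j hj, Matrix.mulVec_zero]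
  · rw [ha i j (by omega), Matrix.zero_mulVec]

theorem map_blockFil_succ_le (ha : IsLowerTriangularOfType s a) (m : ℤ) :
    (Fil (m + s + 1)).map 𝕄 ≤ (Fil (m + s)).map 𝕄 ⊓ Fil (m + 1) :=
  le_inf (Submodule.map_mono (blockFil_antitone (by omega)))
    ((ha.map_blockFil_le _).trans_eq (by congr 1; omega))

theorem blockEnd_apply_of_mem_blockFil (ha : IsLowerTriangularOfType s a) {i j : Fin (l + 1)}
    (hij : (j : ℕ) = i + s) {v : ∀ i : Fin (l + 1), Fin (d i) → k} (hv : v ∈ Fil j) :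
    𝕄 v i = (a i j).mulVec (v j) := by
  rw [blockEnd_apply, Finset.sum_eq_single j _ (by simp)]
  intro j' _ hj'
  rcases lt_or_gt_of_ne (Fin.val_ne_of_ne hj') with h | h
  · rw [hv j' (by omega), Matrix.mulVec_zero]
  · rw [ha i j' (by omega), Matrix.zero_mulVec]

theorem map_proj_map_blockFil (ha : IsLowerTriangularOfType s a) {i j : Fin (l + 1)}
    (hij : (j : ℕ) = i + s) :
    ((Fil j).map 𝕄).map (LinearMap.proj i) = LinearMap.range (a i j).mulVecLin := by
  refine le_antisymm ?_ ?_
  · rintro _ ⟨_, ⟨v, hv, rfl⟩, rfl⟩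
    exact ⟨v j, (ha.blockEnd_apply_of_mem_blockFil hij hv).symm⟩
  · rintro _ ⟨x, rfl⟩
    refine ⟨_, ⟨_, single_mem_blockFil j x, rfl⟩, ?_⟩
    simp [ha.blockEnd_apply_of_mem_blockFil hij (single_mem_blockFil j x)]

theorem finrank_map_blockFil (ha : IsLowerTriangularOfType s a) {i : Fin (l + 1)}
    (h : (i : ℕ) + s ≤ l) :
    finrank k ((Fil (i + s)).map 𝕄) =
      (a i ⟨i + s, Nat.lt_succ_of_le h⟩).rank + finrank k ↥((Fil (i + s)).map 𝕄 ⊓ Fil (i + 1)) := by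
  set j : Fin (l + 1) := ⟨i + s, Nat.lt_succ_of_le h⟩
  have hj : (i : ℤ) + s = j := by simp [j]
  have hle : (Fil j).map 𝕄 ≤ Fil i := (ha.map_blockFil_le j).trans_eq (by congr 1; omega)
  rw [hj, blockFil_succ, ← inf_assoc, inf_eq_left.2 hle, Matrix.rank,
    ← ha.map_proj_map_blockFil rfl, Submodule.finrank_map_add_finrank_inf_ker]

theorem rank_add_finrank_map_blockFil_succ_le (ha : IsLowerTriangularOfType s a)
    {i : Fin (l + 1)} (h : (i : ℕ) + s ≤ l) :
    (a i ⟨i + s, Nat.lt_succ_of_le h⟩).rank + finrank k ((Fil (i + s + 1)).map 𝕄) ≤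
      finrank k ((Fil (i + s)).map 𝕄) :=
  (ha.finrank_map_blockFil h).ge.trans' <|
    Nat.add_le_add_left (Submodule.finrank_mono (ha.map_blockFil_succ_le i)) _

end IsLowerTriangularOfType

namespace IsSpecialLowerTriangularOfType

theorem finrank_map_blockFil_eq (ha : IsSpecialLowerTriangularOfType s a) :
    finrank k ((Fil s).map 𝕄) = finrank k (LinearMap.range 𝕄) ∧
      ∀ (i : Fin (l + 1)) (h : (i : ℕ) + s ≤ l),
        finrank k ((Fil (i + s)).map 𝕄) =
          (a i ⟨i + s, Nat.lt_succ_of_le h⟩).rank + finrank k ((Fil (i + s + 1)).map 𝕄) := by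
  have hstep : ∀ i ∈ (Finset.univ : Finset (Fin (l + 1))),
      ((if h : (i : ℕ) + s ≤ l then (a i ⟨i + s, Nat.lt_succ_of_le h⟩).rank else 0 : ℕ) : ℤ) ≤
        (finrank k ((Fil (i + s)).map 𝕄) : ℤ) - finrank k ((Fil (i + s + 1)).map 𝕄) := by
    intro i _
    split_ifs with h
    · have := ha.1.rank_add_finrank_map_blockFil_succ_le h
      omega
    · have := Submodule.finrank_mono (Submodule.map_mono (f := 𝕄)
        (blockFil_antitone (show (i : ℤ) + s ≤ i + s + 1 by omega)))
      omega
  have hle_range := Submodule.finrank_mono (LinearMap.map_le_range (f := 𝕄) (p := Fil s))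
  have hspecial := congrArg (Nat.cast : ℕ → ℤ) ha.2
  push_cast at hspecial
  have htelescope := sum_finrank_map_blockFil_sub (k := k) (d := d) (a := a) s
  have hsum := le_antisymm (Finset.sum_le_sum hstep) (by omega)
  refine ⟨by omega, fun i h => ?_⟩
  have := (Finset.sum_eq_sum_iff_of_le hstep).1 hsum i (Finset.mem_univ _)
  rw [dif_pos h] at this
  omega

theorem map_blockFil_eq_range (ha : IsSpecialLowerTriangularOfType s a) :
    (Fil s).map 𝕄 = LinearMap.range 𝕄 :=
  Submodule.eq_of_le_of_finrank_le LinearMap.map_le_range ha.finrank_map_blockFil_eq.1.ge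

theorem map_blockFil_inf_eq (ha : IsSpecialLowerTriangularOfType s a) {i : Fin (l + 1)}
    (h : (i : ℕ) + s ≤ l) :
    (Fil (i + s)).map 𝕄 ⊓ Fil (i + 1) = (Fil (i + s + 1)).map 𝕄 := by
  refine (Submodule.eq_of_le_of_finrank_le (ha.1.map_blockFil_succ_le i) ?_).symm
  have := ha.1.finrank_map_blockFil h
  have := ha.finrank_map_blockFil_eq.2 i h
  omega

theorem range_inf_blockFil_le (ha : IsSpecialLowerTriangularOfType s a) (i : ℤ)
    (hi : i ≤ l - s + 1) :
    LinearMap.range 𝕄 ⊓ Fil i ≤ (Fil (i + s)).map 𝕄 := by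
  have hrange : ∀ i : ℤ, i ≤ 0 → LinearMap.range 𝕄 ≤ (Fil (i + s)).map 𝕄 := fun i hi0 =>
    ha.map_blockFil_eq_range.ge.trans (Submodule.map_mono (blockFil_antitone (by omega)))
  rcases le_or_gt i 0 with hi0 | hi0
  · exact inf_le_left.trans (hrange i hi0)
  replace hi0 := hi0.le
  induction i, hi0 using Int.leInduction with
  | base => exact inf_le_left.trans (hrange 0 le_rfl)
  | succ n hn ih =>
    calc LinearMap.range 𝕄 ⊓ Fil (n + 1)
        ≤ (LinearMap.range 𝕄 ⊓ Fil n) ⊓ Fil (n + 1) :=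
          le_inf (inf_le_inf_left _ (blockFil_antitone (by omega))) inf_le_right
      _ ≤ (Fil (n + s)).map 𝕄 ⊓ Fil (n + 1) := inf_le_inf_right _ (ih (by omega))
      _ = (Fil (n + 1 + s)).map 𝕄 := by
        lift n to ℕ using hn
        rw [ha.map_blockFil_inf_eq (i := ⟨n, by omega⟩) (by simp only; omega), add_right_comm]

end IsSpecialLowerTriangularOfType

end BlockEnd

/-- If the block matrix `M = (a_{i,j})` is special lower-triangular of
type `≤ s`, then for every `i ≤ l − s + 1`,
`im(𝕄) ∩ Fil^i V ⊆ (im(𝕄) ∩ Fil^{i+1} V) + 𝕄(Fil^{i+s} V)`. -/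
theorem stmt_10 (k : Type*) [Field k] (l s : ℕ) (d : Fin (l + 1) → ℕ)
    (a : ∀ i j : Fin (l + 1), Matrix (Fin (d i)) (Fin (d j)) k)
    (htri : ∀ i j : Fin (l + 1), (i : ℕ) + s < (j : ℕ) → a i j = 0)
    (hspecial : Module.finrank k (LinearMap.range (blockEnd k l d a))
      = ∑ i : Fin (l + 1),
          if h : (i : ℕ) + s ≤ l then (a i ⟨(i : ℕ) + s, by omega⟩).rank else 0) :
    ∀ i : ℤ, i ≤ (l : ℤ) - s + 1 →
      LinearMap.range (blockEnd k l d a) ⊓ blockFil k l d i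
        ≤ (LinearMap.range (blockEnd k l d a) ⊓ blockFil k l d (i + 1))
          ⊔ Submodule.map (blockEnd k l d a) (blockFil k l d (i + s)) := fun i hi =>
  le_sup_of_le_right
    (IsSpecialLowerTriangularOfType.range_inf_blockFil_le ⟨htri, hspecial⟩ i hi)
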